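/- arXiv:1405.0370 — 2 statements merged into one kernel-verified Lean document; each statement's English description precedes it below -/
import Mathlib

section
/- Let φ : ℂ^n → ℂ^n be a mapping each of whose components is a polynomial, and suppose its Jacobian determinant det J_φ is not identically zero. Then there exists a finite m ∈ ℕ such that for every y ∈ ℂ^n, the set φ^{-1}({y}) ∩ {z : det J_φ(z) ≠ 0} contains at most m elements. -/
open MvPolynomial Filter Topology Set
open scoped Polynomial

/-!
Since `n + 1` polynomials in `n` variables are algebraically dependent, each coordinate `z i`
satisfies a relation `R i (φ z, z i) = 0` with `R i ∈ ℂ[y][T]` nonzero. Off the zero set of the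
product of the leading coefficients of the `R i`, which is dense, a fibre `φ⁻¹ y` lies in a
product of root sets and so has at most `m = ∏ i, deg (R i)` points. For an arbitrary `y`, by the
inverse function theorem, disjoint neighbourhoods of the points of `φ⁻¹ y` with invertible Jacobian
are all mapped onto neighbourhoods of `y`; hence these points lift to distinct points of a nearby
generic fibre, and there are at most `m` of them.
-/

theorem MvPolynomial.exists_ne_zero_aeval_eq_zero {R σ ι : Type*} [CommRing R] [IsDomain R]
    [Fintype σ] [Fintype ι] (h : Fintype.card σ < Fintype.card ι) (v : ι → MvPolynomial σ R) :
    ∃ Q : MvPolynomial ι R, Q ≠ 0 ∧ aeval v Q = 0 := by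
  by_contra! hv
  have hind : AlgebraicIndependent R v :=
    algebraicIndependent_iff.2 fun Q hQ => by_contra fun hQ0 => hv Q hQ0 hQ
  have := hind.lift_cardinalMk_le_trdeg
  rw [MvPolynomial.trdeg_of_isDomain] at this
  simp only [Cardinal.mk_fintype, Cardinal.lift_natCast, Nat.cast_le] at this
  omega

theorem MvPolynomial.exists_polynomial_isRoot_eval {K σ : Type*} [CommRing K] [IsDomain K]
    [Fintype σ] {n : ℕ} (hn : Fintype.card σ ≤ n) (f : MvPolynomial σ K)
    (P : Fin n → MvPolynomial σ K) :
    ∃ R : (MvPolynomial (Fin n) K)[X], R ≠ 0 ∧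
      ∀ z : σ → K, (R.map (eval fun i => eval z (P i))).IsRoot (eval z f) := by
  obtain ⟨Q, hQ0, hQ⟩ := exists_ne_zero_aeval_eq_zero (by simpa [Nat.lt_succ_iff] using hn)
    (Fin.cons f P : Fin (n + 1) → MvPolynomial σ K)
  refine ⟨finSuccEquiv K n Q, by simpa using hQ0, fun z => ?_⟩
  have hz := congrArg (aeval z) hQ
  rw [← AlgHom.comp_apply, comp_aeval, ← Function.comp_def, Fin.comp_cons] at hz
  rw [Polynomial.IsRoot, ← eval_eq_eval_mv_eval']
  simpa [Function.comp_def] using hz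

theorem MvPolynomial.hasStrictFDerivAt_eval {𝕜 σ : Type*} [NontriviallyNormedField 𝕜] [Fintype σ]
    (p : MvPolynomial σ 𝕜) (z : σ → 𝕜) :
    HasStrictFDerivAt (fun w => eval w p)
      (∑ j, eval z (pderiv j p) • (ContinuousLinearMap.proj j : (σ → 𝕜) →L[𝕜] 𝕜)) z := by
  classical
  induction p using MvPolynomial.induction_on with
  | C a =>
    simp only [eval_C]
    refine (hasStrictFDerivAt_const (𝕜 := 𝕜) a z).congr_fderiv ?_
    ext w
    simp
  | add p q hp hq =>
    simp only [map_add]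
    refine (hp.add hq).congr_fderiv ?_
    ext w
    simp [add_mul, Finset.sum_add_distrib]
  | mul_X p i hp =>
    simp only [map_mul, eval_X]
    refine (hp.mul (hasStrictFDerivAt_apply i z)).congr_fderiv ?_
    ext w
    simp [Pi.single_apply, pderiv_X, add_mul, Finset.sum_add_distrib, Finset.mul_sum,
      apply_ite (eval z), ite_mul, mul_assoc]

theorem MvPolynomial.hasStrictFDerivAt_eval_pi {𝕜 σ ι : Type*} [NontriviallyNormedField 𝕜]
    [CompleteSpace 𝕜] [Fintype σ] [Fintype ι] (P : ι → MvPolynomial σ 𝕜) (z : σ → 𝕜) :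
    HasStrictFDerivAt (fun w i => eval w (P i))
      (Matrix.of fun i j => eval z (pderiv j (P i))).mulVecLin.toContinuousLinearMap z := by
  refine hasStrictFDerivAt_pi'.2 fun i => (hasStrictFDerivAt_eval (P i) z).congr_fderiv ?_
  ext w
  simp [Matrix.mulVec, dotProduct]

theorem MvPolynomial.map_nhds_eval_eq_of_det_ne_zero {𝕜 σ : Type*} [NontriviallyNormedField 𝕜]
    [CompleteSpace 𝕜] [Fintype σ] [DecidableEq σ] (P : σ → MvPolynomial σ 𝕜) {z : σ → 𝕜}
    (hz : (Matrix.of fun i j => eval z (pderiv j (P i))).det ≠ 0) :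
    Filter.map (fun w i => eval w (P i)) (𝓝 z) = 𝓝 (fun i => eval z (P i)) :=
  (hasStrictFDerivAt_eval_pi P z).map_nhds_eq_of_surj <| LinearMap.range_eq_top.2 <|
    Matrix.mulVec_surjective_iff_isUnit.2 <| (Matrix.isUnit_iff_isUnit_det _).2 hz.isUnit

theorem MvPolynomial.dense_setOf_eval_ne_zero {𝕜 σ : Type*} [NontriviallyNormedField 𝕜]
    [Fintype σ] {p : MvPolynomial σ 𝕜} (hp : p ≠ 0) : Dense {x : σ → 𝕜 | eval x p ≠ 0} := by
  rw [dense_iff_inter_open]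
  rintro U hU ⟨x, hx⟩
  by_contra hempty
  obtain ⟨r, hr, hball⟩ := Metric.isOpen_iff.1 hU x hx
  refine hp (funext_set (fun i => Metric.ball (x i) r)
    (fun i => infinite_of_mem_nhds _ (Metric.ball_mem_nhds _ hr)) fun y hy => ?_)
  have hyU : y ∈ U := hball (by rwa [ball_pi _ hr])
  by_contra hy0
  exact hempty ⟨y, hyU, by simpa using hy0⟩

theorem Finset.card_le_of_map_nhds_eq {X Y : Type*} [TopologicalSpace X] [T2Space X]
    [TopologicalSpace Y] {f : X → Y} {G : Set Y} (hG : Dense G) {m : ℕ}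
    (hm : ∀ y ∈ G, ∀ s : Finset X, (∀ x ∈ s, f x = y) → s.card ≤ m) {y : Y} {t : Finset X}
    (hfy : ∀ x ∈ t, f x = y) (hf : ∀ x ∈ t, Filter.map f (𝓝 x) = 𝓝 (f x)) : t.card ≤ m := by
  classical
  obtain ⟨U, hU, hUdisj⟩ := t.finite_toSet.t2_separation
  have hW : (⋂ x ∈ t, f '' U x) ∈ 𝓝 y := (biInter_finset_mem t).2 fun x hx => by
    rw [← hfy x hx, ← hf x hx]
    exact image_mem_map ((hU x).2.mem_nhds (hU x).1)
  obtain ⟨y', hy'W, hy'G⟩ := mem_closure_iff_nhds.1 (hG y) _ hW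
  have hpre : ∀ x ∈ t, ∃ x' ∈ U x, f x' = y' := fun x hx => mem_iInter₂.1 hy'W x hx
  choose! g hgU hgf using hpre
  have hinj : InjOn g t := fun a ha b hb hab =>
    hUdisj.elim_set ha hb (g a) (hgU a ha) (hab ▸ hgU b hb)
  calc t.card = (t.image g).card := (card_image_of_injOn hinj).symm
    _ ≤ m := hm y' hy'G _ (by simpa using hgf)

theorem Set.encard_le_of_forall_finset_card_le {α : Type*} {s : Set α} {m : ℕ}
    (h : ∀ t : Finset α, ↑t ⊆ s → t.card ≤ m) : s.encard ≤ m := by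
  by_contra! hlt
  obtain ⟨t, hts, ht⟩ := exists_subset_encard_eq (Order.add_one_le_of_lt hlt)
  have htfin : t.Finite := finite_of_encard_eq_coe ht
  have := h htfin.toFinset (by simpa using hts)
  rw [htfin.encard_eq_coe_toFinset_card] at ht
  norm_cast at ht
  omega

theorem Finset.card_le_prod_natDegree_of_isRoot_map {ι S K : Type*} [Fintype ι] [CommRing S]
    [CommRing K] [IsDomain K] (R : ι → S[X]) (g : S →+* K)
    (hR : ∀ i, g (R i).leadingCoeff ≠ 0) (s : Finset (ι → K))
    (hs : ∀ z ∈ s, ∀ i, ((R i).map g).IsRoot (z i)) : s.card ≤ ∏ i, (R i).natDegree := by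
  classical
  have hmap : ∀ i, (R i).map g ≠ 0 := fun i h => hR i (by
    simpa [Polynomial.leadingCoeff_map_of_leadingCoeff_ne_zero g (hR i)] using
      congrArg Polynomial.leadingCoeff h)
  calc s.card ≤ (Fintype.piFinset fun i => ((R i).map g).roots.toFinset).card :=
        card_le_card fun z hz => Fintype.mem_piFinset.2 fun i => by
          simpa [Polynomial.mem_roots (hmap i)] using hs z hz i
    _ = ∏ i, ((R i).map g).roots.toFinset.card := Fintype.card_piFinset _
    _ ≤ ∏ i, (R i).natDegree := prod_le_prod' fun i _ =>
        (Multiset.toFinset_card_le _).trans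
          ((Polynomial.card_roots' _).trans Polynomial.natDegree_map_le)

theorem polynomial_map_finite_to_one_general (n : ℕ)
    (P : Fin n → MvPolynomial (Fin n) ℂ)
    (φ : (Fin n → ℂ) → (Fin n → ℂ))
    (hφ : ∀ z i, φ z i = MvPolynomial.eval z (P i))
    (J : (Fin n → ℂ) → Matrix (Fin n) (Fin n) ℂ)
    (hJ : ∀ z i j, J z i j = MvPolynomial.eval z (MvPolynomial.pderiv j (P i))) :
    ∃ m : ℕ, ∀ y : Fin n → ℂ,
      ({z : Fin n → ℂ | φ z = y ∧ (J z).det ≠ 0}).Finite ∧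
        ({z : Fin n → ℂ | φ z = y ∧ (J z).det ≠ 0}).ncard ≤ m := by
  obtain rfl : φ = fun z i => eval z (P i) := funext fun z => funext (hφ z)
  obtain rfl : J = fun z => Matrix.of fun i j => eval z (pderiv j (P i)) :=
    funext fun z => Matrix.ext (hJ z)
  choose R hR0 hRroot using fun i => exists_polynomial_isRoot_eval (Fintype.card_fin n).le (X i) P
  have hc : ∏ i, (R i).leadingCoeff ≠ 0 :=
    Finset.prod_ne_zero_iff.2 fun i _ => Polynomial.leadingCoeff_ne_zero.2 (hR0 i)
  refine ⟨∏ i, (R i).natDegree, fun y => ?_⟩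
  rw [← Set.encard_le_coe_iff_finite_ncard_le]
  refine encard_le_of_forall_finset_card_le fun t ht =>
    Finset.card_le_of_map_nhds_eq (dense_setOf_eval_ne_zero hc) ?_ (fun z hz => (ht hz).1)
      fun z hz => map_nhds_eval_eq_of_det_ne_zero P (ht hz).2
  intro y' hy' s hs
  have hlc : ∀ i, eval y' (R i).leadingCoeff ≠ 0 := by
    simpa [eval_prod, Finset.prod_ne_zero_iff] using hy'
  exact s.card_le_prod_natDegree_of_isRoot_map R (eval y') hlc fun z hz i =>
    hs z hz ▸ by simpa using hRroot i z

/-- A polynomial map `φ : ℂ^n → ℂ^n` whose Jacobian determinant is not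
identically zero is uniformly finite-to-one on the set where the Jacobian
determinant is nonzero. -/
theorem polynomial_map_finite_to_one (n : ℕ)
    (P : Fin n → MvPolynomial (Fin n) ℂ)
    (φ : (Fin n → ℂ) → (Fin n → ℂ))
    (hφ : ∀ z i, φ z i = MvPolynomial.eval z (P i))
    (J : (Fin n → ℂ) → Matrix (Fin n) (Fin n) ℂ)
    (hJ : ∀ z i j, J z i j = MvPolynomial.eval z (MvPolynomial.pderiv j (P i)))
    (hJne : ∃ z, (J z).det ≠ 0) :
    ∃ m : ℕ, ∀ y : Fin n → ℂ,
      ({z : Fin n → ℂ | φ z = y ∧ (J z).det ≠ 0}).Finite ∧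
        ({z : Fin n → ℂ | φ z = y ∧ (J z).det ≠ 0}).ncard ≤ m :=
  polynomial_map_finite_to_one_general n P φ hφ J hJ
end

section
/- Let M, N be positive integers with Q = 2M+1 < N. Define p_m = (1/√2) e^{−jπ m/(2N)} sinc(m/(2N)) c_m with c_m > 0 for m = −M,…,M, and Q_o, Q_e the N × Q matrices with entries e^{jπ m (2k−1)/N} and e^{jπ m (2k)/N} respectively (k=1,…,N, m=−M,…,M). Then for almost every x₁ ∈ ℂ there exist ŝ ∈ ℂ^Q and x₂,…,x_N ∈ ℂ such that the (N+Q−1) × (N+Q−1) Jacobian matrix J_{φ_{x₁}}(ŝ, x_{2:N}) given in equation (61) of the paper (of the map (ŝ, x_{2:N}) ↦ first N+Q−1 entries of (diag(x) Q_o diag(p) ŝ, diag(x) Q_e diag(p) ŝ)) has nonzero determinant. -/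
open Complex Matrix

noncomputable def sinc (x : ℝ) : ℝ :=
  if x = 0 then 1 else Real.sin (Real.pi * x) / (Real.pi * x)

/-- `p_m = (1/√2) e^{−jπ m/(2N)} sinc(m/(2N)) c_m`, indexed by `m = −M,…,M`
via `m ↦ (m : Fin (2M+1)) - M`. -/
noncomputable def pvec (N M : ℕ) (c : Fin (2 * M + 1) → ℝ)
    (m : Fin (2 * M + 1)) : ℂ :=
  (1 / Real.sqrt 2 : ℂ) *
    Complex.exp (-I * Real.pi * (((m : ℕ) : ℂ) - (M : ℂ)) / (2 * N)) *
    (sinc ((((m : ℕ) : ℝ) - (M : ℝ)) / (2 * N)) : ℂ) * (c m : ℂ)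

/-- `Q_o` with entries `e^{jπ m (2k−1)/N}`, `k = 1,…,N`, `m = −M,…,M`. -/
noncomputable def Qodd (N M : ℕ) : Matrix (Fin N) (Fin (2 * M + 1)) ℂ :=
  Matrix.of fun k m =>
    Complex.exp (I * Real.pi * (((m : ℕ) : ℂ) - (M : ℂ)) *
      (2 * ((k : ℕ) + 1) - 1) / (N : ℂ))

/-- `Q_e` with entries `e^{jπ m (2k)/N}`, `k = 1,…,N`, `m = −M,…,M`. -/
noncomputable def Qeven (N M : ℕ) : Matrix (Fin N) (Fin (2 * M + 1)) ℂ :=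
  Matrix.of fun k m =>
    Complex.exp (I * Real.pi * (((m : ℕ) : ℂ) - (M : ℂ)) *
      (2 * ((k : ℕ) + 1)) / (N : ℂ))

/-- The input vector `x = (x₁, x₂, …, x_N)`. -/
def xvec (N : ℕ) (x₁ : ℂ) (xr : Fin (N - 1) → ℂ) (k : Fin N) : ℂ :=
  if h : (k : ℕ) = 0 then x₁ else xr ⟨(k : ℕ) - 1, by omega⟩

/-- The map `(ŝ, x_{2:N}) ↦` first `N+Q−1` entries of
`(diag(x) Q_o diag(p) ŝ, diag(x) Q_e diag(p) ŝ)` (for fixed pilot `x₁`). -/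
noncomputable def phiMap (N M : ℕ) (hQ : 2 * M + 1 < N) (c : Fin (2 * M + 1) → ℝ)
    (x₁ : ℂ) (v : (Fin (2 * M + 1) → ℂ) × (Fin (N - 1) → ℂ))
    (i : Fin (N + (2 * M + 1) - 1)) : ℂ :=
  if h : (i : ℕ) < N then
    xvec N x₁ v.2 ⟨(i : ℕ), h⟩ *
      ∑ m, Qodd N M ⟨(i : ℕ), h⟩ m * pvec N M c m * v.1 m
  else
    xvec N x₁ v.2 ⟨(i : ℕ) - N, by omega⟩ *
      ∑ m, Qeven N M ⟨(i : ℕ) - N, by omega⟩ m * pvec N M c m * v.1 m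

/-- Standard basis of the domain `ℂ^Q × ℂ^{N−1}`. -/
noncomputable def basisVec (N M : ℕ) (hQ : 2 * M + 1 < N)
    (j : Fin (N + (2 * M + 1) - 1)) :
    (Fin (2 * M + 1) → ℂ) × (Fin (N - 1) → ℂ) :=
  if h : (j : ℕ) < 2 * M + 1 then (Pi.single ⟨(j : ℕ), h⟩ 1, 0)
  else (0, Pi.single ⟨(j : ℕ) - (2 * M + 1), by omega⟩ 1)

/-- Jacobian matrix of `phiMap` (eq. (61) of the paper): entry `(i,j)` is the
derivative of the `i`-th component in the direction of the `j`-th coordinate. -/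
noncomputable def jacPhi (N M : ℕ) (hQ : 2 * M + 1 < N) (c : Fin (2 * M + 1) → ℝ)
    (x₁ : ℂ) (v : (Fin (2 * M + 1) → ℂ) × (Fin (N - 1) → ℂ)) :
    Matrix (Fin (N + (2 * M + 1) - 1)) (Fin (N + (2 * M + 1) - 1)) ℂ :=
  Matrix.of fun i j => fderiv ℂ (phiMap N M hQ c x₁) v (basisVec N M hQ j) i

/-! For `x₁ ≠ 0`, a co-null condition, take `x_{2:N} = 1` and `ŝ = u / p`, where `W u = e₁` for
the `Q × Q` matrix `W` formed by the first row of `Q_o` and the first `2M` rows of `Q_e`. Then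
`(Q_e p ŝ)_k = 0` for `k < 2M`, and `(Q_o p ŝ)_k ≠ 0` for every `k`, since replacing the first
row of `W` by row `k` of `Q_o` leaves it invertible: `(Q_oᵀ Q_eᵀ)ᵀ` is full spark, being a scaled
Vandermonde matrix with distinct nodes `e^{jπ n/N}`. The derivative of `φ` at this point is
injective: in `φ'(δŝ, δx) = 0` the rows of `W` do not see `δx` and force `p δŝ = 0`, after which
the remaining rows of `Q_o` read `δx_k (Q_o p ŝ)_k = 0`. -/

open Function

theorem Matrix.det_of_zpow_sub_ne_zero {K : Type*} [Field K] {n : ℕ} {ζ : Fin n → K}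
    (hζ : Injective ζ) (hζ0 : ∀ r, ζ r ≠ 0) (d : ℤ) :
    (Matrix.of fun r m : Fin n ↦ ζ r ^ (((m : ℕ) : ℤ) - d)).det ≠ 0 := by
  have hfactor : (Matrix.of fun r m : Fin n ↦ ζ r ^ (((m : ℕ) : ℤ) - d)) =
      Matrix.of fun r m ↦ ζ r ^ (-d) * Matrix.vandermonde ζ r m := by
    ext r m
    rw [Matrix.of_apply, Matrix.of_apply, Matrix.vandermonde_apply, sub_eq_neg_add,
      zpow_add₀ (hζ0 r), zpow_natCast]
  rw [hfactor, Matrix.det_mul_column]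
  exact mul_ne_zero (Finset.prod_ne_zero_iff.2 fun r _ ↦ zpow_ne_zero _ (hζ0 r))
    (Matrix.det_vandermonde_ne_zero_iff.2 hζ)

theorem sinc_ne_zero {x : ℝ} (hx : |x| < 1) : sinc x ≠ 0 := by
  unfold sinc
  split_ifs with h0
  · exact one_ne_zero
  · have hπx : |Real.pi * x| < Real.pi := by
      rw [abs_mul, abs_of_pos Real.pi_pos]
      exact mul_lt_of_lt_one_right Real.pi_pos hx
    refine div_ne_zero ?_ (mul_ne_zero Real.pi_ne_zero h0)
    rw [Ne, Real.sin_eq_zero_iff_of_lt_of_lt (abs_lt.1 hπx).1 (abs_lt.1 hπx).2]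
    exact mul_ne_zero Real.pi_ne_zero h0

theorem pvec_ne_zero {N M : ℕ} (hMN : M < 2 * N) {c : Fin (2 * M + 1) → ℝ}
    (hc : ∀ m, c m ≠ 0) (m : Fin (2 * M + 1)) : pvec N M c m ≠ 0 := by
  have hsinc : |(((m : ℕ) : ℝ) - M) / (2 * N)| < 1 := by
    have hN : (0 : ℝ) < 2 * N := by exact_mod_cast (by omega : 0 < 2 * N)
    have hm : ((m : ℕ) : ℝ) ≤ 2 * M := by exact_mod_cast (by omega : (m : ℕ) ≤ 2 * M)
    have hM : (M : ℝ) < 2 * N := by exact_mod_cast hMN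
    rw [abs_div, abs_of_pos hN, div_lt_one hN, abs_sub_lt_iff]
    constructor <;> linarith [((m : ℕ).cast_nonneg : (0 : ℝ) ≤ (m : ℕ))]
  unfold pvec
  refine mul_ne_zero (mul_ne_zero (mul_ne_zero ?_ (Complex.exp_ne_zero _)) ?_) ?_
  · simp
  · exact_mod_cast sinc_ne_zero hsinc
  · exact_mod_cast hc m

noncomputable def nodeRoot (N : ℕ) : ℂ := Complex.exp (2 * Real.pi * I / ((2 * N : ℕ) : ℂ))

/-- The stacked matrix `(Q_oᵀ Q_eᵀ)ᵀ` with its rows interleaved, so that row `n` has the node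
`e^{jπ (n+1)/N}`. -/
noncomputable def stackedMatrix (N M : ℕ) : Matrix (Fin (2 * N)) (Fin (2 * M + 1)) ℂ :=
  Matrix.of fun n m ↦ (nodeRoot N ^ ((n : ℕ) + 1)) ^ (((m : ℕ) : ℤ) - M)

theorem stackedMatrix_det_submatrix_ne_zero {N M : ℕ} {ρ : Fin (2 * M + 1) → Fin (2 * N)}
    (hρ : Injective ρ) : ((stackedMatrix N M).submatrix ρ id).det ≠ 0 := by
  have hN : 2 * N ≠ 0 := Nat.pos_iff_ne_zero.1 (Fin.pos (ρ 0))
  have hroot := Complex.isPrimitiveRoot_exp (2 * N) hN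
  have hroot0 : nodeRoot N ≠ 0 := Complex.exp_ne_zero _
  refine Matrix.det_of_zpow_sub_ne_zero (fun r r' h ↦ hρ (Fin.ext ?_))
    (fun r ↦ pow_ne_zero _ hroot0) M
  rw [pow_succ, pow_succ] at h
  exact hroot.pow_inj (ρ r).isLt (ρ r').isLt (mul_right_cancel₀ hroot0 h)

theorem exp_eq_nodeRoot_pow {N : ℕ} (hN : N ≠ 0) (t : ℕ) (m : ℤ) :
    Complex.exp (I * Real.pi * m * t / N) = (nodeRoot N ^ t) ^ m := by
  rw [nodeRoot, ← Complex.exp_nat_mul, ← Complex.exp_int_mul]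
  congr 1
  have : (N : ℂ) ≠ 0 := Nat.cast_ne_zero.2 hN
  push_cast
  field_simp

theorem Qodd_eq_stackedMatrix {N M : ℕ} (k : Fin N) (m : Fin (2 * M + 1)) :
    Qodd N M k m = stackedMatrix N M ⟨2 * k, by omega⟩ m := by
  rw [Qodd, stackedMatrix, Matrix.of_apply, Matrix.of_apply,
    ← exp_eq_nodeRoot_pow (Fin.pos k).ne']
  congr 1
  push_cast
  ring

theorem Qeven_eq_stackedMatrix {N M : ℕ} (k : Fin N) (m : Fin (2 * M + 1)) :
    Qeven N M k m = stackedMatrix N M ⟨2 * k + 1, by omega⟩ m := by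
  rw [Qeven, stackedMatrix, Matrix.of_apply, Matrix.of_apply,
    ← exp_eq_nodeRoot_pow (Fin.pos k).ne']
  congr 1
  push_cast
  ring

section Pilot

variable {N M : ℕ} (hMN : 2 * M < N)

/-- Selects row `i` of `Q_o` and rows `0, …, 2M-1` of `Q_e`. -/
def pilotRows (i : Fin N) (r : Fin (2 * M + 1)) : Fin (2 * N) :=
  if (r : ℕ) = 0 then ⟨2 * i, by omega⟩ else ⟨2 * r - 1, by omega⟩

theorem pilotRows_injective (i : Fin N) : Injective (pilotRows hMN i) := by
  intro r r' h
  simp only [pilotRows] at h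
  split_ifs at h <;> simp only [Fin.ext_iff] at h ⊢ <;> omega

noncomputable def pilotMatrix (i : Fin N) : Matrix (Fin (2 * M + 1)) (Fin (2 * M + 1)) ℂ :=
  (stackedMatrix N M).submatrix (pilotRows hMN i) id

theorem pilotMatrix_det_ne_zero (i : Fin N) : (pilotMatrix hMN i).det ≠ 0 :=
  stackedMatrix_det_submatrix_ne_zero (pilotRows_injective hMN i)

theorem pilotMatrix_mulVec_apply (i : Fin N) (w : Fin (2 * M + 1) → ℂ) (r : Fin (2 * M + 1)) :
    (pilotMatrix hMN i *ᵥ w) r =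
      if (r : ℕ) = 0 then (Qodd N M *ᵥ w) i else (Qeven N M *ᵥ w) ⟨r - 1, by omega⟩ := by
  simp only [Matrix.mulVec, dotProduct, pilotMatrix, pilotRows, Matrix.submatrix_apply, id,
    Qodd_eq_stackedMatrix, Qeven_eq_stackedMatrix]
  split_ifs with hr
  · rfl
  · congr! 4
    omega

noncomputable def pilotVec : Fin (2 * M + 1) → ℂ :=
  (pilotMatrix hMN ⟨0, by omega⟩)⁻¹ *ᵥ Pi.single 0 1

theorem pilotMatrix_mulVec_pilotVec :
    pilotMatrix hMN ⟨0, by omega⟩ *ᵥ pilotVec hMN = Pi.single 0 1 := by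
  rw [pilotVec, Matrix.mulVec_mulVec,
    Matrix.mul_nonsing_inv _ (isUnit_iff_ne_zero.2 (pilotMatrix_det_ne_zero hMN _)),
    Matrix.one_mulVec]

theorem Qeven_mulVec_pilotVec {k : Fin N} (hk : (k : ℕ) < 2 * M) :
    (Qeven N M *ᵥ pilotVec hMN) k = 0 := by
  have h := congrFun (pilotMatrix_mulVec_pilotVec hMN) ⟨k + 1, by omega⟩
  rwa [pilotMatrix_mulVec_apply, if_neg (Nat.succ_ne_zero _), Pi.single_apply,
    if_neg (by simp [Fin.ext_iff])] at h

theorem Qodd_mulVec_pilotVec_ne_zero (k : Fin N) : (Qodd N M *ᵥ pilotVec hMN) k ≠ 0 := by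
  intro hk
  have hzero : pilotMatrix hMN k *ᵥ pilotVec hMN = 0 := by
    funext r
    rw [pilotMatrix_mulVec_apply]
    split_ifs with hr
    · exact hk
    · have h := congrFun (pilotMatrix_mulVec_pilotVec hMN) r
      rwa [pilotMatrix_mulVec_apply, if_neg hr, Pi.single_apply,
        if_neg (mt (congrArg Fin.val) hr)] at h
  have h := pilotMatrix_mulVec_pilotVec hMN
  rw [Matrix.eq_zero_of_mulVec_eq_zero (pilotMatrix_det_ne_zero hMN k) hzero,
    Matrix.mulVec_zero] at h
  simpa using congrFun h 0

end Pilot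

theorem xvec_ne_zero {N : ℕ} {x₁ : ℂ} {xr : Fin (N - 1) → ℂ} (hx₁ : x₁ ≠ 0)
    (hxr : ∀ j, xr j ≠ 0) (k : Fin N) : xvec N x₁ xr k ≠ 0 := by
  unfold xvec
  split_ifs
  exacts [hx₁, hxr _]

section Derivative

variable {ι : Type*} [Fintype ι] {n : ℕ}

theorem differentiable_xvec_mul_sum (x₁ : ℂ) (k : Fin n) (a : ι → ℂ) :
    Differentiable ℂ fun v : (ι → ℂ) × (Fin (n - 1) → ℂ) ↦
      xvec n x₁ v.2 k * ∑ m, a m * v.1 m := by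
  by_cases hk : (k : ℕ) = 0 <;> simp only [xvec, hk, dite_true, dite_false] <;> fun_prop

theorem fderiv_xvec_mul_sum (x₁ : ℂ) (k : Fin n) (a : ι → ℂ)
    (v d : (ι → ℂ) × (Fin (n - 1) → ℂ)) :
    fderiv ℂ (fun v : (ι → ℂ) × (Fin (n - 1) → ℂ) ↦ xvec n x₁ v.2 k * ∑ m, a m * v.1 m) v d =
      xvec n x₁ v.2 k * ∑ m, a m * d.1 m + xvec n 0 d.2 k * ∑ m, a m * v.1 m := by
  have hfst (m : ι) : fderiv ℂ (fun y : (ι → ℂ) × (Fin (n - 1) → ℂ) ↦ y.1 m) v =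
      (ContinuousLinearMap.proj m).comp (ContinuousLinearMap.fst ℂ _ _) :=
    ((ContinuousLinearMap.proj m).comp
      (ContinuousLinearMap.fst ℂ (ι → ℂ) (Fin (n - 1) → ℂ))).fderiv
  have hsnd (j : Fin (n - 1)) : fderiv ℂ (fun y : (ι → ℂ) × (Fin (n - 1) → ℂ) ↦ y.2 j) v =
      (ContinuousLinearMap.proj j).comp (ContinuousLinearMap.snd ℂ _ _) :=
    ((ContinuousLinearMap.proj j).comp
      (ContinuousLinearMap.snd ℂ (ι → ℂ) (Fin (n - 1) → ℂ))).fderiv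
  by_cases hk : (k : ℕ) = 0
  · simp (disch := fun_prop) [xvec, hk, fderiv_fun_mul, fderiv_fun_sum, hfst]
  · simp (disch := fun_prop) [xvec, hk, fderiv_fun_mul, fderiv_fun_sum, hfst, hsnd]
    ring

end Derivative

section Jacobian

variable {N M : ℕ}

def splitVec (hN : 0 < N) (w : Fin (N + (2 * M + 1) - 1) → ℂ) :
    (Fin (2 * M + 1) → ℂ) × (Fin (N - 1) → ℂ) :=
  (fun m ↦ w ⟨m, by omega⟩, fun k ↦ w ⟨2 * M + 1 + k, by omega⟩)

theorem splitVec_injective (hN : 0 < N) : Injective (splitVec (M := M) hN) := by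
  intro w w' h
  funext j
  by_cases hj : (j : ℕ) < 2 * M + 1
  · exact congrFun (congrArg Prod.fst h) ⟨j, hj⟩
  · simpa [splitVec, Nat.add_sub_cancel' (not_lt.1 hj)] using
      congrFun (congrArg Prod.snd h) ⟨j - (2 * M + 1), by omega⟩

theorem sum_smul_basisVec (hQ : 2 * M + 1 < N) (w : Fin (N + (2 * M + 1) - 1) → ℂ) :
    ∑ j, w j • basisVec N M hQ j = splitVec (by omega) w := by
  ext m
  · simp only [Prod.fst_sum, Finset.sum_apply, Prod.smul_fst, Pi.smul_apply, smul_eq_mul]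
    rw [Fintype.sum_eq_single ⟨m, by omega⟩]
    · rw [basisVec, dif_pos m.isLt]
      simp [splitVec]
    · intro j hj
      simp only [basisVec]
      split_ifs with h
      · simp [Pi.single_apply, Fin.ext_iff] at hj ⊢
        omega
      · simp
  · simp only [Prod.snd_sum, Finset.sum_apply, Prod.smul_snd, Pi.smul_apply, smul_eq_mul]
    rw [Fintype.sum_eq_single ⟨2 * M + 1 + m, by omega⟩]
    · rw [basisVec, dif_neg (by simp only; omega)]
      simp [splitVec]
    · intro j hj
      simp only [basisVec]
      split_ifs with h
      · simp
      · simp [Pi.single_apply, Fin.ext_iff] at hj ⊢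
        omega

theorem fderiv_phiMap (hQ : 2 * M + 1 < N) (c : Fin (2 * M + 1) → ℝ) (x₁ : ℂ)
    (v d : (Fin (2 * M + 1) → ℂ) × (Fin (N - 1) → ℂ)) :
    fderiv ℂ (phiMap N M hQ c x₁) v d =
      phiMap N M hQ c x₁ (d.1, v.2) + phiMap N M hQ c 0 (v.1, d.2) := by
  have hcomp (i : Fin (N + (2 * M + 1) - 1)) :
      DifferentiableAt ℂ (fun v ↦ phiMap N M hQ c x₁ v i) v ∧
        fderiv ℂ (fun v ↦ phiMap N M hQ c x₁ v i) v d =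
          phiMap N M hQ c x₁ (d.1, v.2) i + phiMap N M hQ c 0 (v.1, d.2) i := by
    by_cases hi : (i : ℕ) < N <;> simp only [phiMap, hi, dite_true, dite_false] <;>
      exact ⟨differentiable_xvec_mul_sum _ _ _ v, fderiv_xvec_mul_sum _ _ _ v d⟩
  rw [fderiv_pi fun i ↦ (hcomp i).1]
  funext i
  exact (hcomp i).2

theorem jacPhi_mulVec (hQ : 2 * M + 1 < N) (c : Fin (2 * M + 1) → ℝ) (x₁ : ℂ)
    (v : (Fin (2 * M + 1) → ℂ) × (Fin (N - 1) → ℂ)) (w : Fin (N + (2 * M + 1) - 1) → ℂ) :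
    jacPhi N M hQ c x₁ v *ᵥ w = fderiv ℂ (phiMap N M hQ c x₁) v (splitVec (by omega) w) := by
  rw [← sum_smul_basisVec hQ, map_sum]
  funext i
  simp [jacPhi, Matrix.mulVec, dotProduct, Finset.sum_apply, mul_comm]

theorem phiMap_of_lt (hQ : 2 * M + 1 < N) (c : Fin (2 * M + 1) → ℝ) (x₁ : ℂ)
    (v : (Fin (2 * M + 1) → ℂ) × (Fin (N - 1) → ℂ)) (k : ℕ) (hk : k < N) :
    phiMap N M hQ c x₁ v ⟨k, by omega⟩ =
      xvec N x₁ v.2 ⟨k, hk⟩ * (Qodd N M *ᵥ (pvec N M c * v.1)) ⟨k, hk⟩ := by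
  simp [phiMap, hk, Matrix.mulVec, dotProduct, mul_assoc]

theorem phiMap_of_ge (hQ : 2 * M + 1 < N) (c : Fin (2 * M + 1) → ℝ) (x₁ : ℂ)
    (v : (Fin (2 * M + 1) → ℂ) × (Fin (N - 1) → ℂ)) (k : ℕ) (hk : k < 2 * M) :
    phiMap N M hQ c x₁ v ⟨N + k, by omega⟩ =
      xvec N x₁ v.2 ⟨k, by omega⟩ * (Qeven N M *ᵥ (pvec N M c * v.1)) ⟨k, by omega⟩ := by
  simp [phiMap, Matrix.mulVec, dotProduct, mul_assoc]

end Jacobian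

theorem jacPhi_det_ne_zero_of_injective {N M : ℕ} (hQ : 2 * M + 1 < N)
    (c : Fin (2 * M + 1) → ℝ) (x₁ : ℂ) {v : (Fin (2 * M + 1) → ℂ) × (Fin (N - 1) → ℂ)}
    (hv : Injective (fderiv ℂ (phiMap N M hQ c x₁) v)) : (jacPhi N M hQ c x₁ v).det ≠ 0 := by
  rw [Ne, ← Matrix.exists_mulVec_eq_zero_iff]
  rintro ⟨w, hw0, hw⟩
  rw [jacPhi_mulVec, ← map_zero (fderiv ℂ (phiMap N M hQ c x₁) v)] at hw
  exact hw0 (splitVec_injective (by omega) (hv hw))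

theorem fderiv_phiMap_pilot_injective {N M : ℕ} (hQ : 2 * M + 1 < N)
    {c : Fin (2 * M + 1) → ℝ} (hc : ∀ m, c m ≠ 0) {x₁ : ℂ} (hx₁ : x₁ ≠ 0) :
    Injective
      (fderiv ℂ (phiMap N M hQ c x₁) (pilotVec (by omega : 2 * M < N) / pvec N M c, 1)) := by
  have hMN : 2 * M < N := by omega
  have hp := pvec_ne_zero (N := N) (by omega) hc
  have hps : pvec N M c * (pilotVec hMN / pvec N M c) = pilotVec hMN := by
    funext m
    exact mul_div_cancel₀ _ (hp m)
  have hx : ∀ k, xvec N x₁ 1 k ≠ 0 := xvec_ne_zero hx₁ fun _ ↦ one_ne_zero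
  rw [injective_iff_map_eq_zero]
  rintro ⟨δs, δx⟩ hδ
  rw [fderiv_phiMap] at hδ
  have hodd (k : ℕ) (hk : k < N) :
      xvec N x₁ 1 ⟨k, hk⟩ * (Qodd N M *ᵥ (pvec N M c * δs)) ⟨k, hk⟩ +
        xvec N 0 δx ⟨k, hk⟩ * (Qodd N M *ᵥ pilotVec hMN) ⟨k, hk⟩ = 0 := by
    have h := congrFun hδ ⟨k, by omega⟩
    rwa [Pi.add_apply, phiMap_of_lt _ _ _ _ k hk, phiMap_of_lt _ _ _ _ k hk, hps] at h
  have heven (k : ℕ) (hk : k < 2 * M) :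
      (Qeven N M *ᵥ (pvec N M c * δs)) ⟨k, by omega⟩ = 0 := by
    have h := congrFun hδ ⟨N + k, by omega⟩
    rw [Pi.add_apply, phiMap_of_ge _ _ _ _ k hk, phiMap_of_ge _ _ _ _ k hk, hps,
      Qeven_mulVec_pilotVec hMN hk, mul_zero, add_zero] at h
    exact (mul_eq_zero.1 h).resolve_left (hx _)
  have hpδs : pvec N M c * δs = 0 := by
    refine Matrix.eq_zero_of_mulVec_eq_zero (pilotMatrix_det_ne_zero hMN ⟨0, by omega⟩) ?_
    funext r
    rw [pilotMatrix_mulVec_apply]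
    split_ifs with hr
    · simpa [xvec, hx₁] using hodd 0 (by omega)
    · exact heven (r - 1) (by omega)
  have hδs : δs = 0 := funext fun m ↦ by simpa [hp m] using congrFun hpδs m
  have hδx : δx = 0 := by
    funext j
    simpa [hpδs, xvec, Qodd_mulVec_pilotVec_ne_zero] using hodd (j + 1) (by omega)
  rw [hδs, hδx, Prod.mk_zero_zero]

/-- For almost every pilot symbol `x₁ ∈ ℂ` there exist `ŝ` and `x_{2:N}` such
that the Jacobian of eq. (61) has nonzero determinant. -/
theorem jacobian_nonsingular_ae (N M : ℕ) (hQ : 2 * M + 1 < N)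
    (c : Fin (2 * M + 1) → ℝ) (hc : ∀ m, 0 < c m) :
    ∀ᵐ x₁ ∂(MeasureTheory.volume : MeasureTheory.Measure ℂ),
      ∃ (s : Fin (2 * M + 1) → ℂ) (xr : Fin (N - 1) → ℂ),
        (jacPhi N M hQ c x₁ (s, xr)).det ≠ 0 := by
  filter_upwards [MeasureTheory.Measure.ae_ne MeasureTheory.volume 0] with x₁ hx₁
  exact ⟨_, _, jacPhi_det_ne_zero_of_injective hQ c x₁
    (fderiv_phiMap_pilot_injective hQ (fun m ↦ (hc m).ne') hx₁)⟩
end
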